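/- Let g be a metric on an open set U ⊆ ℝ⁴ and let X = X^α∂_α be a smooth vector field on U. Then the normalized deformation tensor of X satisfies, pointwise on U, π̂^{αβ} = −|g|^{-1/2} X(|g|^{1/2} g^{αβ}) − g^{αβ} ∂_γX^γ + g^{αγ}∂_γX^β + g^{βγ}∂_γX^α. -/

import Mathlib

noncomputable section

/-- Points of the coordinate chart `ℝ⁴`. -/
abbrev Pt : Type := Fin 4 → ℝ

/-- Coordinate partial derivative `∂_α f`. -/
def pd (α : Fin 4) (f : Pt → ℝ) (x : Pt) : ℝ :=
  fderiv ℝ f x (Pi.single α (1 : ℝ))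

/-- `|g| = |det (g_{αβ})|`. -/
def adet (g : Pt → Matrix (Fin 4) (Fin 4) ℝ) (x : Pt) : ℝ := |(g x).det|

/-- Inverse metric `g^{αβ}`. -/
def ginv (g : Pt → Matrix (Fin 4) (Fin 4) ℝ) (x : Pt) : Matrix (Fin 4) (Fin 4) ℝ := (g x)⁻¹

/-- The wave operator `□_g φ = |g|^{-1/2} ∂_α(|g|^{1/2} g^{αβ} ∂_β φ)`. -/
def boxg (g : Pt → Matrix (Fin 4) (Fin 4) ℝ) (φ : Pt → ℝ) (x : Pt) : ℝ :=
  (Real.sqrt (adet g x))⁻¹ *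
    ∑ α : Fin 4, pd α (fun y => Real.sqrt (adet g y) * ∑ β : Fin 4, ginv g y α β * pd β φ y) x

/-- `X f = X^α ∂_α f`. -/
def Xapp (X : Fin 4 → Pt → ℝ) (f : Pt → ℝ) (x : Pt) : ℝ := ∑ γ : Fin 4, X γ x * pd γ f x

/-- A smooth symmetric everywhere-nondegenerate metric on `U`. -/
structure IsMetricOn (g : Pt → Matrix (Fin 4) (Fin 4) ℝ) (U : Set Pt) : Prop where
  smooth : ∀ α β : Fin 4, ContDiffOn ℝ (⊤ : ℕ∞) (fun x => g x α β) U
  symm : ∀ x ∈ U, ∀ α β : Fin 4, g x α β = g x β α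
  det_ne : ∀ x ∈ U, (g x).det ≠ 0

/-- Deformation tensor `π_{αβ} = (L_X g)_{αβ}` of `X` (lower indices). -/
def piLow (g : Pt → Matrix (Fin 4) (Fin 4) ℝ) (X : Fin 4 → Pt → ℝ) (x : Pt) (α β : Fin 4) : ℝ :=
  (∑ γ : Fin 4, X γ x * pd γ (fun y => g y α β) x)
    + (∑ γ : Fin 4, g x γ β * pd α (X γ) x) + (∑ γ : Fin 4, g x α γ * pd β (X γ) x)

/-- Raised deformation tensor `π^{αβ}`. -/
def piUp (g : Pt → Matrix (Fin 4) (Fin 4) ℝ) (X : Fin 4 → Pt → ℝ) (x : Pt) (α β : Fin 4) : ℝ :=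
  ∑ α' : Fin 4, ∑ β' : Fin 4, ginv g x α α' * ginv g x β β' * piLow g X x α' β'

/-- Normalized deformation tensor `π̂^{αβ} = π^{αβ} - (1/2) g^{αβ} (g_{γδ} π^{γδ})`. -/
def hatPi (g : Pt → Matrix (Fin 4) (Fin 4) ℝ) (X : Fin 4 → Pt → ℝ) (x : Pt) (α β : Fin 4) : ℝ :=
  piUp g X x α β - (1/2) * ginv g x α β * (∑ γ : Fin 4, ∑ δ : Fin 4, g x γ δ * piUp g X x γ δ)

/-!
Write `H = g⁻¹`, `S = X(g) = X^γ ∂_γ g` and `J_{ij} = ∂_i X^j` as matrices. Then `π = S + J g + g Jᵀ`,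
so `π♯ = H π H = H S H + H J + Jᵀ H`, whose contraction with `g` is `tr (H S) + 2 tr J`. On the
other side, Jacobi's formula `∂_γ det g = det g · tr (g⁻¹ ∂_γ g)` together with
`∂_γ g⁻¹ = -g⁻¹ (∂_γ g) g⁻¹` gives `|g|^{-1/2} X(|g|^{1/2} H) = ½ tr (H S) H - H S H`, and the two
sides agree.
-/

open Topology
open scoped Matrix

section Algebra

variable {n R : Type*} [Fintype n] [CommRing R]

theorem sum_sum_mul_eq_trace_transpose_mul (A B : Matrix n n R) :
    ∑ i, ∑ j, A i j * B i j = (Aᵀ * B).trace := by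
  simp only [Matrix.trace, Matrix.diag_apply, Matrix.mul_apply, Matrix.transpose_apply]
  exact Finset.sum_comm

variable [DecidableEq n]

theorem trace_adjugate_mul (A B : Matrix n n R) (hA : IsUnit A.det) :
    (A.adjugate * B).trace = A.det * (A⁻¹ * B).trace := by
  rw [Matrix.inv_def, Matrix.smul_mul, Matrix.trace_smul, smul_eq_mul, ← mul_assoc,
    Ring.mul_inverse_cancel _ hA, one_mul]

variable {G J S : Matrix n n R}

theorem inv_mul_deformation_mul_inv (hG : IsUnit G.det) :
    G⁻¹ * (S + J * G + G * Jᵀ) * G⁻¹ = G⁻¹ * S * G⁻¹ + G⁻¹ * J + Jᵀ * G⁻¹ := by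
  simp only [Matrix.mul_add, Matrix.add_mul, Matrix.mul_assoc, Matrix.mul_nonsing_inv _ hG,
    Matrix.mul_one]
  rw [← Matrix.mul_assoc G⁻¹ G, Matrix.nonsing_inv_mul _ hG, Matrix.one_mul]

theorem trace_mul_inv_mul_deformation_mul_inv (hG : IsUnit G.det) :
    (G * (G⁻¹ * S * G⁻¹ + G⁻¹ * J + Jᵀ * G⁻¹)).trace = (G⁻¹ * S).trace + 2 * J.trace := by
  have hGG : G * G⁻¹ = 1 := Matrix.mul_nonsing_inv _ hG
  simp only [Matrix.mul_add, Matrix.trace_add, ← Matrix.mul_assoc, hGG, Matrix.one_mul]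
  rw [Matrix.trace_mul_comm S, Matrix.trace_mul_cycle, Matrix.nonsing_inv_mul _ hG,
    Matrix.one_mul, Matrix.trace_transpose]
  ring

end Algebra

variable {x : Pt} {γ : Fin 4}

theorem Filter.EventuallyEq.pd_eq {f h : Pt → ℝ} (hfh : f =ᶠ[𝓝 x] h) :
    pd γ f x = pd γ h x := by
  rw [pd, pd, hfh.fderiv_eq]

theorem pd_const (c : ℝ) : pd γ (fun _ => c) x = 0 := by
  simp [pd]

theorem pd_mul {f h : Pt → ℝ} (hf : DifferentiableAt ℝ f x) (hh : DifferentiableAt ℝ h x) :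
    pd γ (fun y => f y * h y) x = pd γ f x * h x + f x * pd γ h x := by
  simp only [pd, fderiv_fun_mul hf hh, add_apply, smul_apply, smul_eq_mul]
  ring

theorem pd_sum {ι : Type*} (s : Finset ι) {f : ι → Pt → ℝ}
    (hf : ∀ i ∈ s, DifferentiableAt ℝ (f i) x) :
    pd γ (fun y => ∑ i ∈ s, f i y) x = ∑ i ∈ s, pd γ (f i) x := by
  simp [pd, fderiv_fun_sum hf]

theorem pd_comp {f : Pt → ℝ} {φ : ℝ → ℝ} {φ' : ℝ} (hφ : HasDerivAt φ φ' (f x))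
    (hf : DifferentiableAt ℝ f x) : pd γ (fun y => φ (f y)) x = φ' * pd γ f x := by
  have h : HasFDerivAt (fun y => φ (f y)) _ x := hφ.comp_hasFDerivAt x hf.hasFDerivAt
  simp [pd, h.fderiv]

def pdMat {m n : Type*} (γ : Fin 4) (M : Pt → Matrix m n ℝ) (x : Pt) : Matrix m n ℝ :=
  Matrix.of fun i j => pd γ (fun y => M y i j) x

section Det

variable {n : Type*} [Fintype n] [DecidableEq n]

def detMultilinear : ContinuousMultilinearMap ℝ (fun _ : n => n → ℝ) ℝ where
  toMultilinearMap := (Matrix.detRowAlternating : (n → ℝ) [⋀^n]→ₗ[ℝ] ℝ).toMultilinearMap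
  cont := continuous_id.matrix_det

/-- Jacobi's formula: by Cramer's rule, the determinant with row `i` replaced by `B i` is
`∑ j, adjugate A j i * B i j`. -/
theorem detMultilinear_linearDeriv (A B : Matrix n n ℝ) :
    (detMultilinear : ContinuousMultilinearMap ℝ (fun _ : n => n → ℝ) ℝ).linearDeriv A B
      = (A.adjugate * B).trace := by
  refine (ContinuousMultilinearMap.linearDeriv_apply _ _ _).trans ?_
  have hrow : ∀ i, detMultilinear (Function.update A i (B i)) = (A.updateRow i (B i)).det :=
    fun i => rfl
  simp only [hrow, ← Matrix.cramer_transpose_apply, Matrix.cramer_eq_adjugate_mulVec,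
    Matrix.mulVec, dotProduct, ← Matrix.adjugate_transpose, Matrix.transpose_apply, Matrix.trace,
    Matrix.diag_apply, Matrix.mul_apply]
  exact Finset.sum_comm

theorem hasFDerivAt_det_entries {M : Pt → Matrix n n ℝ}
    (hM : ∀ i j, DifferentiableAt ℝ (fun y => M y i j) x) :
    HasFDerivAt (fun y => (M y).det)
      ((detMultilinear.linearDeriv (M x)).comp
        (ContinuousLinearMap.pi fun i => ContinuousLinearMap.pi fun j =>
          fderiv ℝ (fun y => M y i j) x)) x := by
  have hpi : HasFDerivAt (fun y i j => M y i j)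
      (ContinuousLinearMap.pi fun i => ContinuousLinearMap.pi fun j =>
        fderiv ℝ (fun y => M y i j) x) x :=
    hasFDerivAt_pi.2 fun i => hasFDerivAt_pi.2 fun j => (hM i j).hasFDerivAt
  exact (detMultilinear.hasFDerivAt (M x)).comp x hpi

variable {M : Pt → Matrix n n ℝ}

theorem pd_det (hM : ∀ i j, DifferentiableAt ℝ (fun y => M y i j) x) :
    pd γ (fun y => (M y).det) x = ((M x).adjugate * pdMat γ M x).trace := by
  rw [pd, (hasFDerivAt_det_entries hM).fderiv]
  exact detMultilinear_linearDeriv (M x) (pdMat γ M x)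

theorem differentiableAt_det (hM : ∀ i j, DifferentiableAt ℝ (fun y => M y i j) x) :
    DifferentiableAt ℝ (fun y => (M y).det) x :=
  (hasFDerivAt_det_entries hM).differentiableAt

theorem differentiableAt_adjugate_apply (hM : ∀ i j, DifferentiableAt ℝ (fun y => M y i j) x)
    (i j : n) : DifferentiableAt ℝ (fun y => (M y).adjugate i j) x := by
  simp only [Matrix.adjugate_apply]
  refine differentiableAt_det fun k l => ?_
  simp only [Matrix.updateRow_apply]
  split_ifs
  · exact differentiableAt_const _
  · exact hM k l

theorem differentiableAt_inv_apply (hM : ∀ i j, DifferentiableAt ℝ (fun y => M y i j) x)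
    (hdet : (M x).det ≠ 0) (i j : n) : DifferentiableAt ℝ (fun y => (M y)⁻¹ i j) x := by
  simp only [Matrix.inv_def, Ring.inverse_eq_inv', Matrix.smul_apply, smul_eq_mul]
  exact ((differentiableAt_det hM).inv hdet).mul (differentiableAt_adjugate_apply hM i j)

end Det

section MatrixCalculus

variable {l m n : Type*}

theorem pdMat_mul [Fintype m] {A : Pt → Matrix l m ℝ} {B : Pt → Matrix m n ℝ}
    (hA : ∀ i j, DifferentiableAt ℝ (fun y => A y i j) x)
    (hB : ∀ i j, DifferentiableAt ℝ (fun y => B y i j) x) :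
    pdMat γ (fun y => A y * B y) x = pdMat γ A x * B x + A x * pdMat γ B x := by
  ext i j
  simp only [pdMat, Matrix.of_apply, Matrix.mul_apply, Matrix.add_apply]
  rw [pd_sum (f := fun k y => A y i k * B y k j) _ fun k _ => (hA i k).mul (hB k j),
    ← Finset.sum_add_distrib]
  exact Finset.sum_congr rfl fun k _ => pd_mul (hA i k) (hB k j)

theorem Filter.EventuallyEq.pdMat_eq {A B : Pt → Matrix m n ℝ} (hAB : A =ᶠ[𝓝 x] B) :
    pdMat γ A x = pdMat γ B x := by
  ext i j
  exact Filter.EventuallyEq.pd_eq (hAB.mono fun y hy => congrFun (congrFun hy i) j)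

theorem pdMat_const (C : Matrix m n ℝ) : pdMat γ (fun _ => C) x = 0 := by
  ext i j
  exact pd_const _

end MatrixCalculus

section Inverse

variable {n : Type*} [Fintype n] [DecidableEq n] {M : Pt → Matrix n n ℝ}

theorem pdMat_inv (hM : ∀ i j, DifferentiableAt ℝ (fun y => M y i j) x) (hdet : (M x).det ≠ 0) :
    pdMat γ (fun y => (M y)⁻¹) x = -((M x)⁻¹ * pdMat γ M x * (M x)⁻¹) := by
  have hunit : IsUnit (M x).det := hdet.isUnit
  have hnear : (fun y => (M y)⁻¹ * M y) =ᶠ[𝓝 x] fun _ => 1 :=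
    ((differentiableAt_det hM).continuousAt.eventually_ne hdet).mono fun y hy =>
      Matrix.nonsing_inv_mul _ hy.isUnit
  have hprod := pdMat_mul (γ := γ) (differentiableAt_inv_apply hM hdet) hM
  rw [hnear.pdMat_eq, pdMat_const] at hprod
  have := congrArg (· * (M x)⁻¹) hprod
  simp only [Matrix.zero_mul, Matrix.add_mul, Matrix.mul_assoc, Matrix.mul_nonsing_inv _ hunit,
    Matrix.mul_one] at this
  rw [eq_neg_iff_add_eq_zero, Matrix.mul_assoc, this.symm]

theorem hasDerivAt_sqrt_abs {d : ℝ} (hd : d ≠ 0) :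
    HasDerivAt (fun t => √|t|) (1 / (2 * √|d|) * SignType.sign d) d :=
  (Real.hasDerivAt_sqrt (abs_ne_zero.2 hd)).comp d (hasDerivAt_abs hd)

theorem differentiableAt_sqrt_abs_det (hM : ∀ i j, DifferentiableAt ℝ (fun y => M y i j) x)
    (hdet : (M x).det ≠ 0) : DifferentiableAt ℝ (fun y => √|(M y).det|) x :=
  (hasDerivAt_sqrt_abs hdet).differentiableAt.comp (g := fun t => √|t|) x
    (differentiableAt_det hM)

theorem pd_sqrt_abs_det (hM : ∀ i j, DifferentiableAt ℝ (fun y => M y i j) x)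
    (hdet : (M x).det ≠ 0) :
    pd γ (fun y => √|(M y).det|) x = 1 / 2 * √|(M x).det| * ((M x)⁻¹ * pdMat γ M x).trace := by
  have hsqrt : √|(M x).det| ≠ 0 := Real.sqrt_ne_zero'.2 (abs_pos.2 hdet)
  rw [pd_comp (hasDerivAt_sqrt_abs hdet) (differentiableAt_det hM), pd_det hM,
    trace_adjugate_mul _ _ hdet.isUnit, ← mul_assoc, mul_assoc (1 / (2 * _)), sign_mul_self]
  field_simp
  rw [Real.sq_sqrt (abs_nonneg _)]

end Inverse

/-- The matrix whose `(i, j)` entry is `∂_i X^j`. -/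
def derivMat (X : Fin 4 → Pt → ℝ) (x : Pt) : Matrix (Fin 4) (Fin 4) ℝ :=
  Matrix.of fun i j => pd i (X j) x

section Metric

variable {g : Pt → Matrix (Fin 4) (Fin 4) ℝ} {X : Fin 4 → Pt → ℝ} {x : Pt}

theorem IsMetricOn.differentiableAt {U : Set Pt} (hg : IsMetricOn g U) (hU : IsOpen U)
    (hx : x ∈ U) (i j : Fin 4) : DifferentiableAt ℝ (fun y => g y i j) x :=
  ((hg.smooth i j).contDiffAt (hU.mem_nhds hx)).differentiableAt (by simp)

theorem IsMetricOn.isSymm {U : Set Pt} (hg : IsMetricOn g U) (hx : x ∈ U) : (g x).IsSymm :=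
  Matrix.IsSymm.ext fun i j => hg.symm x hx j i

theorem of_piLow :
    Matrix.of (piLow g X x)
      = ∑ γ, X γ x • pdMat γ g x + derivMat X x * g x + g x * (derivMat X x)ᵀ := by
  ext α β
  simp only [piLow, pdMat, derivMat, Matrix.of_apply, Matrix.add_apply, Matrix.sum_apply,
    Matrix.smul_apply, smul_eq_mul, Matrix.mul_apply, Matrix.transpose_apply, mul_comm (g x _ β)]

theorem of_piUp : Matrix.of (piUp g X x) = ginv g x * Matrix.of (piLow g X x) * (ginv g x)ᵀ := by
  ext α β
  simp only [piUp, Matrix.of_apply, Matrix.mul_apply, Matrix.transpose_apply, Finset.sum_mul]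
  rw [Finset.sum_comm]
  exact Finset.sum_congr rfl fun _ _ => Finset.sum_congr rfl fun _ _ => by ring

theorem pd_sqrt_adet_mul_ginv (hg : ∀ i j, DifferentiableAt ℝ (fun y => g y i j) x)
    (hdet : (g x).det ≠ 0) (γ α β : Fin 4) :
    pd γ (fun y => √(adet g y) * ginv g y α β) x
      = √(adet g x) * (1 / 2 * ((g x)⁻¹ * pdMat γ g x).trace * (g x)⁻¹ α β
          - ((g x)⁻¹ * pdMat γ g x * (g x)⁻¹) α β) := by
  have hinv : pd γ (fun y => (g y)⁻¹ α β) x = -((g x)⁻¹ * pdMat γ g x * (g x)⁻¹) α β :=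
    congrFun (congrFun (pdMat_inv hg hdet) α) β
  simp only [adet, ginv]
  rw [pd_mul (h := fun y => (g y)⁻¹ α β) (differentiableAt_sqrt_abs_det hg hdet)
    (differentiableAt_inv_apply hg hdet α β), pd_sqrt_abs_det hg hdet, hinv]
  ring

theorem Xapp_sqrt_adet_mul_ginv (hg : ∀ i j, DifferentiableAt ℝ (fun y => g y i j) x)
    (hdet : (g x).det ≠ 0) (α β : Fin 4) :
    Xapp X (fun y => √(adet g y) * ginv g y α β) x
      = √(adet g x) * (1 / 2 * ((g x)⁻¹ * ∑ γ, X γ x • pdMat γ g x).trace * (g x)⁻¹ α β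
          - ((g x)⁻¹ * (∑ γ, X γ x • pdMat γ g x) * (g x)⁻¹) α β) := by
  simp only [Xapp, pd_sqrt_adet_mul_ginv hg hdet, Matrix.trace_sum, Matrix.sum_apply,
    Matrix.mul_smul, Matrix.smul_mul, Matrix.trace_smul, Matrix.smul_apply, smul_eq_mul,
    Finset.mul_sum, Finset.sum_mul, ← Finset.sum_sub_distrib]
  exact Finset.sum_congr rfl fun γ _ => by ring

theorem of_piUp_eq (hsymm : (g x).IsSymm) (hdet : IsUnit (g x).det) :
    Matrix.of (piUp g X x)
      = (g x)⁻¹ * (∑ γ, X γ x • pdMat γ g x) * (g x)⁻¹ + (g x)⁻¹ * derivMat X x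
        + (derivMat X x)ᵀ * (g x)⁻¹ := by
  rw [of_piUp, of_piLow, ginv, hsymm.inv.eq, inv_mul_deformation_mul_inv hdet]

theorem sum_sum_mul_piUp (hsymm : (g x).IsSymm) (hdet : IsUnit (g x).det) :
    ∑ γ, ∑ δ, g x γ δ * piUp g X x γ δ
      = ((g x)⁻¹ * ∑ γ, X γ x • pdMat γ g x).trace + 2 * (derivMat X x).trace := by
  calc ∑ γ, ∑ δ, g x γ δ * piUp g X x γ δ
      = ((g x)ᵀ * Matrix.of (piUp g X x)).trace := sum_sum_mul_eq_trace_transpose_mul _ _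
    _ = _ := by
      rw [hsymm.eq, of_piUp_eq hsymm hdet, trace_mul_inv_mul_deformation_mul_inv hdet]

end Metric

theorem hatPi_coordinate_formula_general
    (U : Set Pt) (hU : IsOpen U)
    (g : Pt → Matrix (Fin 4) (Fin 4) ℝ) (hg : IsMetricOn g U)
    (X : Fin 4 → Pt → ℝ) :
    ∀ x ∈ U, ∀ α β : Fin 4,
      hatPi g X x α β =
        -((Real.sqrt (adet g x))⁻¹ *
            Xapp X (fun y => Real.sqrt (adet g y) * ginv g y α β) x)
          - ginv g x α β * (∑ γ : Fin 4, pd γ (X γ) x)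
          + (∑ γ : Fin 4, ginv g x α γ * pd γ (X β) x)
          + (∑ γ : Fin 4, ginv g x β γ * pd γ (X α) x) := by
  intro x hx α β
  have hdet := hg.det_ne x hx
  have hsymm := hg.isSymm hx
  have hsqrt : √(adet g x) ≠ 0 := Real.sqrt_ne_zero'.2 (abs_pos.2 hdet)
  have hJH : ∑ γ, ginv g x β γ * pd γ (X α) x = ((derivMat X x)ᵀ * (g x)⁻¹) α β := by
    simp only [Matrix.mul_apply, Matrix.transpose_apply, ginv, derivMat, Matrix.of_apply,
      hsymm.inv.apply, mul_comm]
  have hHJ : ∑ γ, ginv g x α γ * pd γ (X β) x = ((g x)⁻¹ * derivMat X x) α β := rfl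
  have htrace : ∑ γ, pd γ (X γ) x = (derivMat X x).trace := rfl
  have hP : piUp g X x α β = _ :=
    congrFun (congrFun (of_piUp_eq (X := X) hsymm hdet.isUnit) α) β
  rw [hatPi, sum_sum_mul_piUp hsymm hdet.isUnit, hP,
    Xapp_sqrt_adet_mul_ginv (hg.differentiableAt hU hx) hdet, hHJ, hJH, htrace]
  simp only [Matrix.add_apply, ginv]
  field_simp
  ring

/-- coordinate formula for the normalized deformation tensor:
`π̂^{αβ} = -|g|^{-1/2} X(|g|^{1/2} g^{αβ}) - g^{αβ} ∂_γ X^γ + g^{αγ}∂_γ X^β + g^{βγ}∂_γ X^α`. -/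
theorem hatPi_coordinate_formula
    (U : Set Pt) (hU : IsOpen U)
    (g : Pt → Matrix (Fin 4) (Fin 4) ℝ) (hg : IsMetricOn g U)
    (X : Fin 4 → Pt → ℝ) (hX : ∀ α, ContDiffOn ℝ (⊤ : ℕ∞) (X α) U) :
    ∀ x ∈ U, ∀ α β : Fin 4,
      hatPi g X x α β =
        -((Real.sqrt (adet g x))⁻¹ *
            Xapp X (fun y => Real.sqrt (adet g y) * ginv g y α β) x)
          - ginv g x α β * (∑ γ : Fin 4, pd γ (X γ) x)
          + (∑ γ : Fin 4, ginv g x α γ * pd γ (X β) x)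
          + (∑ γ : Fin 4, ginv g x β γ * pd γ (X α) x) :=
  hatPi_coordinate_formula_general U hU g hg X
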